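/- In the state machine for (FIFO) work-stealing with weak multiplicity, if all inserted tasks are pairwise distinct, then each fixed process extracts any given task at most once: in any finite sequence of transitions from the initial state, no two distinct Take transitions (respectively, no two distinct Steal_i transitions of the same thief i) return the same task. -/

import Mathlib

/-- Labels for the (FIFO) work-stealing with weak multiplicity state machine:
a `Put` of task `x`, an extraction (Take if `i = 0`, Steal otherwise) by
process `i` returning task `x`, or an extraction on an empty component
returning `empty`. -/
inductive WLab (n : ℕ) where
  | put (x : ℕ) : WLab n
  | extract (i : Fin n) (x : ℕ) : WLab n
  | extractEmpty (i : Fin n) : WLab n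

/-- Transition relation of the weak-multiplicity state machine.  States are
`n`-vectors of finite strings over ℕ (head of each string at the front).
`put x` appends `x` to every component.  An extraction by process `i` on
`t_i = x_1 ⋯ x_j · q`, where `x_j · q` is the shortest component (encoded by
`hshort`: some component `p` satisfies `k + |t_p| ≤ |t_i| + 1`, equivalently
`k ≤ j` for `j` determined by the minimum length), returns `x_k` for some
`1 ≤ k ≤ j` and replaces `t_i` by `x_{k+1} ⋯ x_j · q`. -/
inductive WStep {n : ℕ} : (Fin n → List ℕ) → WLab n → (Fin n → List ℕ) → Prop
  | put (s : Fin n → List ℕ) (x : ℕ) :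
      WStep s (.put x) (fun i => s i ++ [x])
  | extract (s : Fin n → List ℕ) (i : Fin n) (k x : ℕ)
      (hk1 : 1 ≤ k) (hk2 : k ≤ (s i).length)
      (hshort : ∃ p, k + (s p).length ≤ (s i).length + 1)
      (hx : (s i)[k - 1]? = some x) :
      WStep s (.extract i x) (Function.update s i ((s i).drop k))
  | extractEmpty (s : Fin n → List ℕ) (i : Fin n) (h : s i = []) :
      WStep s (.extractEmpty i) s

/-- Finite executions of the weak-multiplicity machine from the all-empty
initial state, recording the trace of transitions and the resulting state. -/
inductive WExec {n : ℕ} : List (WLab n) → (Fin n → List ℕ) → Prop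
  | nil : WExec [] (fun _ => [])
  | snoc {tr : List (WLab n)} {s : Fin n → List ℕ} {l : WLab n} {s' : Fin n → List ℕ} :
      WExec tr s → WStep s l s' → WExec (tr ++ [l]) s'

/-- The string of tasks inserted so far: the arguments of `put` transitions,
in order. -/
def winserted {n : ℕ} (tr : List (WLab n)) : List ℕ :=
  tr.filterMap fun l => match l with | .put x => some x | _ => none

/-! Every component only ever receives the inserted tasks in insertion order and loses
prefixes, so it is a suffix of the inserted string. With distinct insertions, an extraction
by `i` therefore removes the returned task from `t_i` for good, and `i` cannot return it
again. -/

theorem List.eq_of_getElem?_eq_some_of_count_le_one {α : Type*} [BEq α] [LawfulBEq α]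
    {l : List α} {x : α} (hl : l.count x ≤ 1) {a b : ℕ}
    (ha : l[a]? = some x) (hb : l[b]? = some x) : a = b := by
  by_contra hne
  wlog hab : a < b generalizing a b
  · exact this hb ha (Ne.symm hne) (by omega)
  have hfront : x ∈ l.take b := List.mem_of_getElem? (i := a) (by simpa [hab] using ha)
  have hback : x ∈ l.drop b := List.mem_of_getElem? (i := 0) (by simpa using hb)
  have htwo : 2 ≤ l.count x := by
    rw [← List.take_append_drop b l, List.count_append]
    have hfront_pos := List.count_pos_iff.mpr hfront
    have hback_pos := List.count_pos_iff.mpr hback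
    omega
  omega

theorem List.not_mem_drop_of_getElem?_eq_some {α : Type*} {l : List α} (hl : l.Nodup)
    {m k : ℕ} {x : α} (hx : l[m]? = some x) (hmk : m < k) : x ∉ l.drop k := by
  rw [List.mem_drop_iff_getElem]
  rintro ⟨j, hj, hjx⟩
  obtain ⟨hm, rfl⟩ := List.getElem?_eq_some_iff.mp hx
  have hjm : k + j = m := hl.getElem_inj_iff.mp hjx
  omega

section

variable {n : ℕ}

@[simp]
theorem winserted_append (u v : List (WLab n)) :
    winserted (u ++ v) = winserted u ++ winserted v :=
  List.filterMap_append

@[simp]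
theorem winserted_extract (i : Fin n) (x : ℕ) : winserted [WLab.extract i x] = [] := rfl

@[simp]
theorem winserted_extractEmpty (i : Fin n) : winserted [WLab.extractEmpty i] = [] := rfl

namespace WStep

variable {s s' : Fin n → List ℕ} {l : WLab n}

theorem suffix_append_winserted (h : WStep s l s') (j : Fin n) :
    s' j <:+ s j ++ winserted [l] := by
  cases h with
  | put x => exact List.suffix_rfl
  | extract i k x _ _ _ _ =>
    rw [winserted_extract, List.append_nil]
    rcases eq_or_ne j i with rfl | hji
    · simpa using List.drop_suffix k (s j)
    · simp [Function.update_of_ne hji]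
  | extractEmpty i _ => simp

theorem mem_of_extract {i : Fin n} {x : ℕ} (h : WStep s (.extract i x) s') : x ∈ s i := by
  cases h with
  | extract _ _ _ _ _ _ hx => exact List.mem_of_getElem? hx

theorem not_mem_of_extract {i : Fin n} {x : ℕ} (h : WStep s (.extract i x) s')
    (hnd : (s i).Nodup) : x ∉ s' i := by
  cases h with
  | extract _ k _ hk1 _ _ hx =>
    simpa using List.not_mem_drop_of_getElem?_eq_some hnd hx (by omega)

end WStep

namespace WExec

variable {tr : List (WLab n)} {s : Fin n → List ℕ}

theorem suffix_winserted (h : WExec tr s) (j : Fin n) : s j <:+ winserted tr := by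
  induction h with
  | nil => exact List.nil_suffix
  | snoc _ hstep ih =>
    rw [winserted_append]
    exact (hstep.suffix_append_winserted j).trans (List.suffix_append_self_iff.mpr ih)

theorem mem_winserted_of_extract_mem (h : WExec tr s) {i : Fin n} {x : ℕ}
    (hx : .extract i x ∈ tr) : x ∈ winserted tr := by
  induction h with
  | nil => simp at hx
  | @snoc tr s l s' hexec hstep ih =>
    rw [winserted_append]
    rcases List.mem_append.mp hx with hx | hx
    · exact List.mem_append_left _ (ih hx)
    · rw [List.mem_singleton] at hx
      subst hx
      exact List.mem_append_left _ ((hexec.suffix_winserted i).subset hstep.mem_of_extract)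

theorem not_mem_of_extract_mem (h : WExec tr s) (hnd : (winserted tr).Nodup) {i : Fin n}
    {x : ℕ} (hx : .extract i x ∈ tr) : x ∉ s i := by
  induction h with
  | nil => simp at hx
  | @snoc tr s l s' hexec hstep ih =>
    rw [winserted_append] at hnd
    rcases List.mem_append.mp hx with hx | hx
    · have hfresh : x ∉ winserted [l] :=
        List.disjoint_of_nodup_append hnd (hexec.mem_winserted_of_extract_mem hx)
      intro hmem
      rcases List.mem_append.mp ((hstep.suffix_append_winserted i).subset hmem) with hs | hl
      · exact ih hnd.of_append_left hx hs
      · exact hfresh hl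
    · rw [List.mem_singleton] at hx
      subst hx
      exact hstep.not_mem_of_extract (hnd.of_append_left.sublist (hexec.suffix_winserted i).sublist)

open Classical in
theorem count_extract_le_one (h : WExec tr s) (hnd : (winserted tr).Nodup) (i : Fin n)
    (x : ℕ) : tr.count (.extract i x) ≤ 1 := by
  induction h with
  | nil => simp
  | @snoc tr s l s' hexec hstep ih =>
    rw [winserted_append] at hnd
    rw [List.count_append, List.count_singleton]
    by_cases hl : l = .extract i x
    · subst hl
      have : WLab.extract i x ∉ tr := fun hx =>
        hexec.not_mem_of_extract_mem hnd.of_append_left hx hstep.mem_of_extract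
      simp [List.count_eq_zero_of_not_mem this]
    · simpa [hl] using ih hnd.of_append_left

end WExec

end

/-- if all inserted tasks are pairwise distinct, then each fixed
process extracts any given task at most once: no two distinct extraction
transitions of the same process return the same task. -/
theorem weak_mult_extract_at_most_once_per_process {n : ℕ}
    (tr : List (WLab n)) (s : Fin n → List ℕ) (h : WExec tr s)
    (hnd : (winserted tr).Nodup)
    (i : Fin n) (x : ℕ) (a b : ℕ)
    (ha : tr[a]? = some (.extract i x))
    (hb : tr[b]? = some (.extract i x)) :
    a = b := by
  classical
  exact List.eq_of_getElem?_eq_some_of_count_le_one (h.count_extract_le_one hnd i x) ha hb
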